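/- Let a, b be positive integers with b > a > 2 and e = lcm(a,b). For every c ≥ e − a there exists a tame polynomial automorphism of C^3 with multidegree (a, b, c). Specifically, writing c = e + (k−1)a + m with k ≥ 0 and 0 < m < a, the composition F = (x, y, z + x^k(x^{e/a} − y^{e/b})) ∘ (x + z^a + z^m, y + z^b, z) is such an automorphism; and if a | c with c ≥ e − a, then (x, y, z + x^{c/a}) ∘ (x + z^a, y + z^b, z) works. -/

import Mathlib

/-! Both maps are compositions of three elementary maps, hence tame. Their first two
components `x + z^a (+ z^m)` and `y + z^b` visibly have degrees `a` and `b`. In the third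
component `z + P^k (P^n - Q^n')`, with `P = x + z^a + z^m`, `Q = y + z^b` and `a n = b n' = e`,
the leading powers `z^e` of `P^n` and `Q^n'` cancel, which bounds its degree by
`a k + a (n - 1) + m = c`. Setting `x = y = 0` leaves `z + s^k (s^n - z^e)` with `s = z^a + z^m`,
whose coefficient of `z^c` is `(k + n) - k = n ≠ 0` by the binomial theorem, so the degree is
exactly `c`. -/

open MvPolynomial Finset

/-- A polynomial map `ℂ^n → ℂ^n`, given by its coordinate polynomials. -/
abbrev PolyMap (n : ℕ) := Fin n → MvPolynomial (Fin n) ℂ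

/-- Composition of polynomial maps: `(compPM F G) = F ∘ G`. -/
noncomputable def compPM {n : ℕ} (F G : PolyMap n) : PolyMap n :=
  fun i => aeval G (F i)

/-- The identity polynomial map. -/
noncomputable def idPM (n : ℕ) : PolyMap n := fun i => X i

/-- `F` is a polynomial automorphism: it has a polynomial inverse. -/
def IsPolyAut {n : ℕ} (F : PolyMap n) : Prop :=
  ∃ G : PolyMap n, compPM F G = idPM n ∧ compPM G F = idPM n

/-- `F` is elementary: it changes one coordinate `j` by adding a polynomial
not involving the variable `j`. -/
def IsElementaryPM {n : ℕ} (F : PolyMap n) : Prop :=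
  ∃ (j : Fin n) (g : MvPolynomial (Fin n) ℂ),
    degreeOf j g = 0 ∧ F j = X j + g ∧ ∀ i, i ≠ j → F i = X i

/-- `F` is a linear (degree ≤ 1) automorphism. -/
def IsLinearPM {n : ℕ} (F : PolyMap n) : Prop :=
  IsPolyAut F ∧ ∀ i, (F i).totalDegree ≤ 1

/-- `F` is tame: a composition of linear and elementary automorphisms. -/
inductive IsTamePM : {n : ℕ} → PolyMap n → Prop
  | lin {n} (F : PolyMap n) : IsLinearPM F → IsTamePM F
  | elem {n} (F : PolyMap n) : IsElementaryPM F → IsTamePM F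
  | comp {n} (F G : PolyMap n) : IsTamePM F → IsTamePM G → IsTamePM (compPM F G)

/-- The multidegree of a polynomial map of `ℂ^3`. -/
noncomputable def mdeg3 (F : PolyMap 3) : ℕ × ℕ × ℕ :=
  ((F 0).totalDegree, (F 1).totalDegree, (F 2).totalDegree)

section PolyMaps

variable {n : ℕ}

lemma compPM_assoc (F G H : PolyMap n) :
    compPM (compPM F G) H = compPM F (compPM G H) := by
  funext i
  simp only [compPM]
  rw [← AlgHom.comp_apply, comp_aeval]
  rfl

lemma idPM_compPM (F : PolyMap n) : compPM (idPM n) F = F := by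
  funext i; exact aeval_X F i

lemma isPolyAut_compPM {F G : PolyMap n} (hF : IsPolyAut F) (hG : IsPolyAut G) :
    IsPolyAut (compPM F G) := by
  obtain ⟨F', hFF', hF'F⟩ := hF
  obtain ⟨G', hGG', hG'G⟩ := hG
  refine ⟨compPM G' F', ?_, ?_⟩
  · rw [compPM_assoc, ← compPM_assoc G, hGG', idPM_compPM, hFF']
  · rw [compPM_assoc, ← compPM_assoc F', hF'F, idPM_compPM, hG'G]

lemma aeval_eq_self_of_degreeOf_eq_zero {j : Fin n} {g : MvPolynomial (Fin n) ℂ}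
    (hg : degreeOf j g = 0) {G : PolyMap n} (hG : ∀ i, i ≠ j → G i = X i) : aeval G g = g :=
  calc aeval G g = aeval X g :=
        eval₂Hom_congr' rfl (fun i hi _ => hG i fun hij =>
          (mem_vars_iff_degreeOf_ne_zero.mp hi) (hij ▸ hg)) rfl
    _ = g := aeval_X_left_apply g

lemma IsElementaryPM.isPolyAut {F : PolyMap n} (hF : IsElementaryPM F) : IsPolyAut F := by
  obtain ⟨j, g, hg, hFj, hFi⟩ := hF
  let G : PolyMap n := Function.update (idPM n) j (X j - g)
  have hGi : ∀ i, i ≠ j → G i = X i := fun i hi => Function.update_of_ne hi _ _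
  refine ⟨G, funext fun i => ?_, funext fun i => ?_⟩ <;> obtain rfl | hij := eq_or_ne i j
  · rw [compPM, hFj, map_add, aeval_X, aeval_eq_self_of_degreeOf_eq_zero hg hGi]
    simp [G, idPM]
  · simp [compPM, hFi i hij, hGi i hij, idPM]
  · simp only [compPM, G, Function.update_self, map_sub, aeval_X, hFj,
      aeval_eq_self_of_degreeOf_eq_zero hg hFi]
    simp [idPM]
  · simp [compPM, hFi i hij, hGi i hij, idPM]

lemma IsTamePM.isPolyAut {F : PolyMap n} (hF : IsTamePM F) : IsPolyAut F := by
  induction hF with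
  | lin F h => exact h.1
  | elem F h => exact IsElementaryPM.isPolyAut h
  | comp F G _ _ ihF ihG => exact isPolyAut_compPM ihF ihG

end PolyMaps

lemma degreeOf_eq_zero_of_mem_supported {σ R : Type*} [CommSemiring R] {j : σ}
    {p : MvPolynomial σ R} (hp : p ∈ supported R {j}ᶜ) : degreeOf j p = 0 := by
  by_contra h
  exact mem_supported.mp hp (mem_vars_iff_degreeOf_ne_zero.mpr h) rfl

lemma isElementaryPM_update {n : ℕ} {j : Fin n} {g : MvPolynomial (Fin n) ℂ}
    (hg : g ∈ supported ℂ {j}ᶜ) : IsElementaryPM (Function.update (idPM n) j (X j + g)) :=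
  ⟨j, g, degreeOf_eq_zero_of_mem_supported hg, Function.update_self .., fun _ hi =>
    Function.update_of_ne hi ..⟩

lemma isTamePM_triangular {u v g : MvPolynomial (Fin 3) ℂ} (hu : u ∈ supported ℂ {2})
    (hv : v ∈ supported ℂ {2}) (hg : g ∈ supported ℂ {2}ᶜ) :
    IsTamePM (compPM ![X 0, X 1, X 2 + g] ![X 0 + u, X 1 + v, X 2]) := by
  have hsub : ∀ j : Fin 3, j ≠ 2 → ({2} : Set (Fin 3)) ⊆ {j}ᶜ := by
    intro j hj; simpa [eq_comm] using hj
  have hu1 : aeval (Function.update (idPM 3) 1 (X 1 + v)) u = u :=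
    aeval_eq_self_of_degreeOf_eq_zero
      (degreeOf_eq_zero_of_mem_supported (supported_mono (hsub 1 (by decide)) hu))
      fun i hi => Function.update_of_ne hi ..
  have hE : (![X 0, X 1, X 2 + g] : PolyMap 3) = Function.update (idPM 3) 2 (X 2 + g) := by
    funext i; fin_cases i <;> rfl
  have hB : (![X 0 + u, X 1 + v, X 2] : PolyMap 3) =
      compPM (Function.update (idPM 3) 0 (X 0 + u)) (Function.update (idPM 3) 1 (X 1 + v)) := by
    funext i; fin_cases i <;> simp [compPM, idPM, -aeval_eq_bind₁, hu1]
  rw [hE, hB]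
  exact .comp _ _ (.elem _ (isElementaryPM_update hg)) <|
    .comp _ _ (.elem _ (isElementaryPM_update (supported_mono (hsub 0 (by decide)) hu)))
      (.elem _ (isElementaryPM_update (supported_mono (hsub 1 (by decide)) hv)))

lemma compPM_triangular (p q g : MvPolynomial (Fin 3) ℂ) :
    compPM ![X 0, X 1, X 2 + g] ![p, q, X 2] = ![p, q, X 2 + aeval ![p, q, X 2] g] := by
  funext i; fin_cases i <;> simp [compPM]

lemma natDegree_aeval_le_totalDegree {σ R : Type*} [CommSemiring R] {f : σ → Polynomial R}
    (hf : ∀ i, (f i).natDegree ≤ 1) (p : MvPolynomial σ R) :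
    (aeval f p).natDegree ≤ p.totalDegree := by
  rw [aeval_def, eval₂_eq]
  refine Polynomial.natDegree_sum_le_of_forall_le _ _ fun d hd => ?_
  refine (Polynomial.natDegree_C_mul_le _ _).trans <| (Polynomial.natDegree_prod_le _ _).trans ?_
  refine le_trans ?_ (le_totalDegree hd)
  refine Finset.sum_le_sum fun i _ => Polynomial.natDegree_pow_le.trans ?_
  simpa using Nat.mul_le_mul_left (d i) (hf i)

lemma le_totalDegree_of_coeff_aeval_ne_zero {σ R : Type*} [CommSemiring R]
    {f : σ → Polynomial R} (hf : ∀ i, (f i).natDegree ≤ 1) {p : MvPolynomial σ R} {d : ℕ}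
    (hd : (aeval f p).coeff d ≠ 0) : d ≤ p.totalDegree :=
  (Polynomial.le_natDegree_of_ne_zero hd).trans (natDegree_aeval_le_totalDegree hf p)

lemma totalDegree_add_pow_sub_pow_le {σ R : Type*} [CommRing R] {u v : MvPolynomial σ R}
    {d d' : ℕ} (hu : u.totalDegree ≤ d) (huv : (u + v).totalDegree ≤ d)
    (hv : v.totalDegree ≤ d') (n : ℕ) :
    ((u + v) ^ n - u ^ n).totalDegree ≤ d * (n - 1) + d' := by
  rw [← geom_sum₂_mul, add_sub_cancel_left]
  refine (totalDegree_mul _ _).trans (add_le_add ?_ hv)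
  refine totalDegree_finsetSum_le fun i hi => (totalDegree_mul _ _).trans ?_
  have hi : i ≤ n - 1 := Nat.le_sub_one_of_lt (Finset.mem_range.mp hi)
  calc (((u + v) ^ i).totalDegree + (u ^ (n - 1 - i)).totalDegree)
      ≤ i * d + (n - 1 - i) * d :=
        add_le_add ((totalDegree_pow _ _).trans (Nat.mul_le_mul_left _ huv))
          ((totalDegree_pow _ _).trans (Nat.mul_le_mul_left _ hu))
    _ = d * (n - 1) := by rw [← add_mul, Nat.add_sub_cancel' hi, mul_comm]

section Degrees

variable {σ R : Type*} [CommRing R] [Nontrivial R] (x y z : σ)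

lemma totalDegree_X_add_X_pow {q : ℕ} (hq : 1 < q) :
    (X x + X z ^ q : MvPolynomial σ R).totalDegree = q := by
  rw [totalDegree_add_eq_right_of_totalDegree_lt] <;> simp [hq]

lemma totalDegree_X_add_X_pow_add_X_pow {a m : ℕ} (hm : 0 < m) (hma : m < a) :
    (X x + X z ^ a + X z ^ m : MvPolynomial σ R).totalDegree = a := by
  have ha : 1 < a := by omega
  rw [totalDegree_add_eq_left_of_totalDegree_lt] <;>
    rw [totalDegree_X_add_X_pow x z ha]
  rwa [totalDegree_X_pow]

lemma totalDegree_pow_sub_pow_le {a b m n n' : ℕ} (hm : 0 < m) (hma : m < a) (hab : a < b)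
    (hnn' : a * (n + 1) = b * n') :
    ((X x + X z ^ a + X z ^ m) ^ (n + 1) - (X y + X z ^ b) ^ n' : MvPolynomial σ R).totalDegree
      ≤ a * n + m := by
  have hsplit : (X x + X z ^ a + X z ^ m) ^ (n + 1) - (X y + X z ^ b) ^ n' =
      ((X z ^ a + (X x + X z ^ m)) ^ (n + 1) - (X z ^ a) ^ (n + 1)) -
        ((X z ^ b + X y) ^ n' - (X z ^ b) ^ n' : MvPolynomial σ R) := by
    rw [← pow_mul, ← pow_mul, hnn']; ring
  rw [hsplit]
  refine (totalDegree_sub _ _).trans (max_le ?_ ?_)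
  · have huv : (X z ^ a + (X x + X z ^ m) : MvPolynomial σ R).totalDegree ≤ a := by
      rw [← add_assoc, add_comm (X z ^ a), totalDegree_X_add_X_pow_add_X_pow x z hm hma]
    have hv : (X x + X z ^ m : MvPolynomial σ R).totalDegree ≤ m :=
      (totalDegree_add _ _).trans (by simp; omega)
    simpa using totalDegree_add_pow_sub_pow_le (by simp) huv hv (n + 1)
  · have huv : (X z ^ b + X y : MvPolynomial σ R).totalDegree ≤ b := by
      rw [add_comm, totalDegree_X_add_X_pow y z (by omega)]
    refine (totalDegree_add_pow_sub_pow_le (by simp) huv (totalDegree_X y).le n').trans ?_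
    have hn' : 0 < n' := Nat.pos_of_ne_zero (by rintro rfl; simp_all)
    have hb : b ≤ a * n + a := by rw [← Nat.mul_succ, hnn']; exact Nat.le_mul_of_pos_right b hn'
    rw [Nat.mul_sub_one, ← hnn', Nat.mul_succ]
    omega

end Degrees

lemma coeff_X_pow_add_X_pow_pow {R : Type*} [CommSemiring R] {a m : ℕ} (hma : m < a) (N : ℕ) :
    ((Polynomial.X ^ a + Polynomial.X ^ m : Polynomial R) ^ (N + 1)).coeff (a * N + m) = N + 1 := by
  have hsplit : (Polynomial.X ^ a + Polynomial.X ^ m : Polynomial R) =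
      Polynomial.X ^ m * Polynomial.expand R (a - m) (Polynomial.X + 1) := by
    rw [map_add, Polynomial.expand_X, map_one, mul_add, mul_one, ← pow_add,
      Nat.add_sub_cancel' hma.le]
  have hidx : a * N + m = m * (N + 1) + N * (a - m) := by
    zify [hma.le]; ring
  rw [hsplit, mul_pow, ← pow_mul, ← map_pow, hidx, Polynomial.coeff_X_pow_mul',
    if_pos le_self_add, Nat.add_sub_cancel_left, Polynomial.coeff_expand_mul (by omega),
    Polynomial.coeff_X_add_one_pow, Nat.choose_succ_self_right]
  push_cast; rfl

lemma coeff_X_pow_add_X_pow_pow_mul_sub {R : Type*} [CommRing R] {a m : ℕ} (hma : m < a)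
    (k n : ℕ) :
    ((Polynomial.X ^ a + Polynomial.X ^ m : Polynomial R) ^ k *
      ((Polynomial.X ^ a + Polynomial.X ^ m) ^ (n + 1) - Polynomial.X ^ (a * (n + 1)))).coeff
        (a * (k + n) + m) = (n + 1 : R) := by
  rw [mul_sub, ← pow_add, Polynomial.coeff_sub, ← add_assoc, coeff_X_pow_add_X_pow_pow hma]
  cases k with
  | zero =>
    rw [pow_zero, one_mul, Polynomial.coeff_X_pow, if_neg (by nlinarith)]
    push_cast; ring
  | succ k =>
    rw [show a * (k + 1 + n) + m = a * k + m + a * (n + 1) by ring, Polynomial.coeff_mul_X_pow,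
      coeff_X_pow_add_X_pow_pow hma]
    push_cast; ring

lemma natDegree_specialize_le (i : Fin 3) :
    (![0, 0, Polynomial.X] i : Polynomial ℂ).natDegree ≤ 1 := by
  fin_cases i <;> simp

noncomputable def triangularPow (a b q : ℕ) : PolyMap 3 :=
  compPM ![X 0, X 1, X 2 + X 0 ^ q] ![X 0 + X 2 ^ a, X 1 + X 2 ^ b, X 2]

noncomputable def triangularBinom (a b m k n n' : ℕ) : PolyMap 3 :=
  compPM ![X 0, X 1, X 2 + X 0 ^ k * (X 0 ^ n - X 1 ^ n')]
    ![X 0 + X 2 ^ a + X 2 ^ m, X 1 + X 2 ^ b, X 2]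

lemma isTamePM_triangularPow (a b q : ℕ) : IsTamePM (triangularPow a b q) := by
  have hz : (X 2 : MvPolynomial (Fin 3) ℂ) ∈ supported ℂ {2} := X_mem_supported.mpr rfl
  have hx : (X 0 : MvPolynomial (Fin 3) ℂ) ∈ supported ℂ {2}ᶜ :=
    X_mem_supported.mpr (by decide)
  exact isTamePM_triangular (pow_mem hz a) (pow_mem hz b) (pow_mem hx q)

lemma isTamePM_triangularBinom (a b m k n n' : ℕ) : IsTamePM (triangularBinom a b m k n n') := by
  have hz : (X 2 : MvPolynomial (Fin 3) ℂ) ∈ supported ℂ {2} := X_mem_supported.mpr rfl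
  have hx : (X 0 : MvPolynomial (Fin 3) ℂ) ∈ supported ℂ {2}ᶜ :=
    X_mem_supported.mpr (by decide)
  have hy : (X 1 : MvPolynomial (Fin 3) ℂ) ∈ supported ℂ {2}ᶜ :=
    X_mem_supported.mpr (by decide)
  rw [triangularBinom, add_assoc]
  exact isTamePM_triangular (add_mem (pow_mem hz a) (pow_mem hz m)) (pow_mem hz b)
    (mul_mem (pow_mem hx k) (sub_mem (pow_mem hx n) (pow_mem hy n')))

lemma mdeg3_triangularPow {a b q : ℕ} (ha : 1 < a) (hb : 1 < b) (hq : 0 < q) :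
    mdeg3 (triangularPow a b q) = (a, b, a * q) := by
  have haq : 1 < a * q := ha.trans_le (Nat.le_mul_of_pos_right a hq)
  have hdeg : (X 2 + (X 0 + X 2 ^ a) ^ q : MvPolynomial (Fin 3) ℂ).totalDegree = a * q := by
    refine le_antisymm ((totalDegree_add _ _).trans (max_le ?_ ?_)) ?_
    · simpa using haq.le
    · rw [mul_comm]
      exact (totalDegree_pow _ _).trans (by rw [totalDegree_X_add_X_pow 0 2 ha])
    · refine le_totalDegree_of_coeff_aeval_ne_zero natDegree_specialize_le ?_
      simp [← pow_mul, Polynomial.coeff_X, haq.ne]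
  simp [triangularPow, compPM_triangular, mdeg3, totalDegree_X_add_X_pow _ _ ha,
    totalDegree_X_add_X_pow _ _ hb, hdeg]

lemma mdeg3_triangularBinom {a b c k m n n' : ℕ} (hm : 0 < m) (hma : m < a) (hab : a < b)
    (hnn' : a * n = b * n') (hn' : 0 < n') (hc : c + a = a * n + k * a + m) :
    mdeg3 (triangularBinom a b m k n n') = (a, b, c) := by
  have hn : 2 ≤ n := by
    by_contra! h
    have : a * n ≤ a * 1 := Nat.mul_le_mul_left a (by omega)
    have : b ≤ b * n' := Nat.le_mul_of_pos_right b hn'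
    omega
  obtain ⟨n, rfl⟩ : ∃ n₀, n = n₀ + 1 := ⟨n - 1, by omega⟩
  obtain rfl : c = a * (k + n) + m := by rw [mul_add, mul_comm a k]; linarith [mul_add a n 1]
  have hdeg : (X 2 + (X 0 + X 2 ^ a + X 2 ^ m) ^ k *
      ((X 0 + X 2 ^ a + X 2 ^ m) ^ (n + 1) - (X 1 + X 2 ^ b) ^ n') :
        MvPolynomial (Fin 3) ℂ).totalDegree = a * (k + n) + m := by
    refine le_antisymm ((totalDegree_add _ _).trans (max_le ?_ ?_)) ?_
    · simp; nlinarith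
    · refine (totalDegree_mul _ _).trans ?_
      refine (add_le_add (totalDegree_pow _ _)
        (totalDegree_pow_sub_pow_le 0 1 2 hm hma hab hnn')).trans ?_
      rw [totalDegree_X_add_X_pow_add_X_pow 0 2 hm hma]
      nlinarith
    · refine le_totalDegree_of_coeff_aeval_ne_zero natDegree_specialize_le ?_
      have hc1 : 1 ≠ a * (k + n) + m := by nlinarith
      simp [← pow_mul, ← hnn', Polynomial.coeff_X, hc1, coeff_X_pow_add_X_pow_pow_mul_sub hma]
      norm_cast
  simp [triangularBinom, compPM_triangular, mdeg3, totalDegree_X_add_X_pow _ _ (by omega : 1 < b),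
    totalDegree_X_add_X_pow_add_X_pow _ _ hm hma, hdeg]

lemma exists_eq_add_mul_add_of_not_dvd {a c e : ℕ} (ha : 0 < a) (hae : a ∣ e) (hc : e ≤ c + a)
    (hac : ¬ a ∣ c) : ∃ k m, 0 < m ∧ m < a ∧ c + a = e + k * a + m := by
  obtain ⟨r, hr⟩ := Nat.exists_eq_add_of_le hc
  refine ⟨r / a, r % a, Nat.pos_of_ne_zero fun hr0 => hac ?_, Nat.mod_lt r ha, ?_⟩
  · have : a ∣ c + a := hr ▸ dvd_add hae (Nat.dvd_of_mod_eq_zero hr0)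
    exact (Nat.dvd_add_left (dvd_refl a)).mp this
  · rw [hr, add_assoc, Nat.div_add_mod']

theorem stmt8 (a b : ℕ) (ha : 2 < a) (hab : a < b) (e : ℕ)
    (he : e = Nat.lcm a b) (c : ℕ) (hc : e ≤ c + a) :
    (∃ F : PolyMap 3, IsTamePM F ∧ IsPolyAut F ∧ mdeg3 F = (a, b, c)) ∧
    (∀ k m : ℕ, 0 < m → m < a → c + a = e + k * a + m →
      ∀ F : PolyMap 3,
        F = compPM ![X 0, X 1, X 2 + X 0 ^ k * (X 0 ^ (e / a) - X 1 ^ (e / b))]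
                   ![X 0 + X 2 ^ a + X 2 ^ m, X 1 + X 2 ^ b, X 2] →
        IsTamePM F ∧ IsPolyAut F ∧ mdeg3 F = (a, b, c)) ∧
    (a ∣ c →
      ∀ F : PolyMap 3,
        F = compPM ![X 0, X 1, X 2 + X 0 ^ (c / a)]
                   ![X 0 + X 2 ^ a, X 1 + X 2 ^ b, X 2] →
        IsTamePM F ∧ IsPolyAut F ∧ mdeg3 F = (a, b, c)) := by
  have hae : a * (e / a) = e := Nat.mul_div_cancel' (he ▸ Nat.dvd_lcm_left a b)
  have hbe : b * (e / b) = e := Nat.mul_div_cancel' (he ▸ Nat.dvd_lcm_right a b)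
  have hbe' : b ≤ e :=
    he ▸ Nat.le_of_dvd (Nat.lcm_pos (by omega) (by omega)) (Nat.dvd_lcm_right a b)
  have hbinom : ∀ k m, 0 < m → m < a → c + a = e + k * a + m →
      IsTamePM (triangularBinom a b m k (e / a) (e / b)) ∧
        IsPolyAut (triangularBinom a b m k (e / a) (e / b)) ∧
        mdeg3 (triangularBinom a b m k (e / a) (e / b)) = (a, b, c) := fun k m hm hma hckm =>
    ⟨isTamePM_triangularBinom .., (isTamePM_triangularBinom ..).isPolyAut,
      mdeg3_triangularBinom hm hma hab (hae.trans hbe.symm) (Nat.div_pos hbe' (by omega))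
        (hae.symm ▸ hckm)⟩
  have hpow : a ∣ c → IsTamePM (triangularPow a b (c / a)) ∧
      IsPolyAut (triangularPow a b (c / a)) ∧ mdeg3 (triangularPow a b (c / a)) = (a, b, c) :=
    fun hac => ⟨isTamePM_triangularPow .., (isTamePM_triangularPow ..).isPolyAut, by
      simpa [Nat.mul_div_cancel' hac] using mdeg3_triangularPow (a := a) (b := b) (by omega)
        (by omega) (Nat.div_pos (Nat.le_of_dvd (by omega) hac) (by omega))⟩
  refine ⟨?_, fun k m hm hma hckm F hF => hF ▸ hbinom k m hm hma hckm,
    fun hac F hF => hF ▸ hpow hac⟩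
  by_cases hac : a ∣ c
  · exact ⟨_, hpow hac⟩
  · obtain ⟨k, m, hm, hma, hckm⟩ :=
      exists_eq_add_mul_add_of_not_dvd (by omega) (hae ▸ Nat.dvd_mul_right a _) hc hac
    exact ⟨_, hbinom k m hm hma hckm⟩
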